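/- arXiv:1210.6711 — 3 statements merged into one kernel-verified Lean document; each statement's English description precedes it below -/
import Mathlib

section
/- Let 0 < λ ≤ Λ, α ≥ (Λ(n−1) − λ)/λ with α > 0, and 0 < a < b. Define M₂ = a^α/(b^α − a^α) and φ(x) = 1 + M₂ − M₂·|x|^{−α} on ℝⁿ \ {0}. Then φ(x) = 0 when |x| = a/b, φ(x) = 1 when |x| = 1, and M⁺(D²φ(x)) = M₂·α·|x|^{−α−2}·(Λ(n−1) − λ(α+1)) ≤ 0 for all x ≠ 0. -/
open Matrix BigOperators

/-- The Hessian matrix of a function on Euclidean space. -/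
noncomputable def hessian {n : ℕ} (φ : EuclideanSpace ℝ (Fin n) → ℝ)
    (x : EuclideanSpace ℝ (Fin n)) : Matrix (Fin n) (Fin n) ℝ :=
  Matrix.of fun i j =>
    fderiv ℝ (fun y => fderiv ℝ φ y (EuclideanSpace.single j 1)) x (EuclideanSpace.single i 1)

noncomputable def pucciPlus (lam Lam : ℝ) {n : ℕ} (M : Matrix (Fin n) (Fin n) ℝ)
    (hM : M.IsHermitian) : ℝ :=
  lam * ∑ i, (if hM.eigenvalues i < 0 then hM.eigenvalues i else 0) +
  Lam * ∑ i, (if 0 < hM.eigenvalues i then hM.eigenvalues i else 0)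

/-!
Near any `x ≠ 0` the function `φ` is `c + m‖y‖ᵖ` with `m = -M₂`, `p = -α`, whose Hessian is
`m p ‖x‖^(p-2) (I + (p - 2) x̂ x̂ᵀ)`. Such a matrix `A` satisfies `(A - c₁)(A - c₂) = 0` with
`c₁ = m p ‖x‖^(p-2) > 0` and `c₂ = (p - 1) c₁ < 0`, so its eigenvalues only take these two values,
and the trace forces `c₂` to be simple. This gives `M⁺` exactly; the bound on `α` makes it
nonpositive.
-/

open Filter Topology
open scoped InnerProductSpace

section NormRpow

variable {E : Type*} [NormedAddCommGroup E] [InnerProductSpace ℝ E] {x : E}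

theorem hasFDerivAt_norm_rpow_of_ne_zero (p : ℝ) (hx : x ≠ 0) :
    HasFDerivAt (fun y : E ↦ ‖y‖ ^ p) ((p * ‖x‖ ^ (p - 2)) • innerSL ℝ x) x := by
  convert (hasStrictFDerivAt_norm_sq x).hasFDerivAt.rpow_const (p := p / 2) (by simp [hx])
    using 1
  · ext y
    rw [← Real.rpow_natCast_mul (norm_nonneg _)]
    ring_nf
  · rw [← Nat.cast_smul_eq_nsmul ℝ, smul_smul, ← Real.rpow_natCast_mul (norm_nonneg _)]
    ring_nf

theorem hasFDerivAt_fderiv_norm_rpow_apply (p : ℝ) (hx : x ≠ 0) (w : E) :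
    HasFDerivAt (fun y ↦ fderiv ℝ (fun z : E ↦ ‖z‖ ^ p) y w)
      ((p * ‖x‖ ^ (p - 2)) • innerSL ℝ w +
        (p * (p - 2) * ‖x‖ ^ (p - 4) * ⟪x, w⟫_ℝ) • innerSL ℝ x) x := by
  have hD : (fun y ↦ fderiv ℝ (fun z : E ↦ ‖z‖ ^ p) y w) =ᶠ[𝓝 x]
      fun y ↦ (p * ‖y‖ ^ (p - 2)) * ⟪w, y⟫_ℝ := by
    filter_upwards [eventually_ne_nhds hx] with y hy
    rw [(hasFDerivAt_norm_rpow_of_ne_zero p hy).fderiv]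
    simp [real_inner_comm]
  refine HasFDerivAt.congr_of_eventuallyEq ?_ hD
  refine (((hasFDerivAt_norm_rpow_of_ne_zero (p - 2) hx).const_mul p).fun_mul
    (innerSL ℝ w).hasFDerivAt).congr_fderiv ?_
  rw [innerSL_apply_apply, real_inner_comm, smul_smul, smul_smul]
  congr 2
  ring_nf

end NormRpow

theorem hessian_eq_of_eventuallyEq_norm_rpow {n : ℕ} {φ : EuclideanSpace ℝ (Fin n) → ℝ}
    {x : EuclideanSpace ℝ (Fin n)} (hx : x ≠ 0) {c m p : ℝ}
    (hφ : φ =ᶠ[𝓝 x] fun y ↦ c + m * ‖y‖ ^ p) :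
    hessian φ x = (m * p * ‖x‖ ^ (p - 2)) • (1 : Matrix (Fin n) (Fin n) ℝ) +
      (m * p * (p - 2) * ‖x‖ ^ (p - 4)) • vecMulVec ⇑x ⇑x := by
  have hD (w : EuclideanSpace ℝ (Fin n)) : (fun y ↦ fderiv ℝ φ y w) =ᶠ[𝓝 x]
      fun y ↦ m * fderiv ℝ (fun z ↦ ‖z‖ ^ p) y w := by
    filter_upwards [hφ.fderiv (𝕜 := ℝ), eventually_ne_nhds hx] with y hy hy0
    have hdiff := (hasFDerivAt_norm_rpow_of_ne_zero p hy0).differentiableAt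
    rw [hy, fderiv_const_add, fderiv_const_mul hdiff]
    rfl
  ext i j
  have hj := (hasFDerivAt_fderiv_norm_rpow_apply p hx (EuclideanSpace.single j 1)).const_mul m
  rw [hessian, of_apply, (hD _).fderiv_eq, hj.fderiv]
  simp only [EuclideanSpace.inner_single_right, Real.ringHom_apply, one_mul, smul_add,
    _root_.add_apply, _root_.smul_apply, coe_innerSL_apply, PiLp.single_apply,
    MonoidWithZeroHom.map_ite_one_zero, mul_ite, mul_one, mul_zero, smul_eq_mul, Matrix.add_apply,
    Matrix.smul_apply, one_apply, vecMulVec_apply]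
  split_ifs <;> ring

theorem sum_comp_of_forall_eq_or_eq {ι : Type*} [Fintype ι] (g : ℝ → ℝ) {f : ι → ℝ}
    {c₁ c₂ k : ℝ} (hc : c₁ ≠ c₂) (hf : ∀ i, f i = c₁ ∨ f i = c₂)
    (hsum : ∑ i, f i = (Fintype.card ι - k) * c₁ + k * c₂) :
    ∑ i, g (f i) = (Fintype.card ι - k) * g c₁ + k * g c₂ := by
  set s := (g c₂ - g c₁) / (c₂ - c₁)
  have hs : s * (c₂ - c₁) = g c₂ - g c₁ := div_mul_cancel₀ _ (sub_ne_zero.mpr hc.symm)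
  have hline (i : ι) : g (f i) = g c₁ + s * (f i - c₁) := by
    rcases hf i with h | h <;> rw [h]
    · ring
    · linear_combination -hs
  simp only [hline, Finset.sum_add_distrib, ← Finset.mul_sum, Finset.sum_sub_distrib, hsum,
    Finset.sum_const, Finset.card_univ, nsmul_eq_mul]
  linear_combination k * hs

theorem Matrix.IsHermitian.eigenvalues_eq_or_eq_of_mul_eq_zero {ι : Type*} [Fintype ι]
    [DecidableEq ι] {A : Matrix ι ι ℝ} (hA : A.IsHermitian) {c₁ c₂ : ℝ}
    (h : (A - c₁ • 1) * (A - c₂ • 1) = 0) (i : ι) :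
    hA.eigenvalues i = c₁ ∨ hA.eigenvalues i = c₂ := by
  set v := ⇑(hA.eigenvectorBasis i)
  have hv : v ≠ 0 := (WithLp.ofLp_eq_zero 2).ne.2 <| hA.eigenvectorBasis.orthonormal.ne_zero i
  have hAv (c : ℝ) : (A - c • 1) *ᵥ v = (hA.eigenvalues i - c) • v := by
    rw [sub_mulVec, smul_mulVec, one_mulVec, hA.mulVec_eigenvectorBasis i, sub_smul]
  have h0 : ((hA.eigenvalues i - c₁) * (hA.eigenvalues i - c₂)) • v = 0 := by
    rw [mul_comm, ← smul_smul, ← hAv, ← mulVec_smul, ← hAv, mulVec_mulVec, h, zero_mulVec]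
  simpa [sub_eq_zero, hv] using h0

theorem pucciPlus_eq_of_mul_eq_zero (lam Lam : ℝ) {n : ℕ} {A : Matrix (Fin n) (Fin n) ℝ}
    (hA : A.IsHermitian) {c₁ c₂ : ℝ} (hc₁ : 0 < c₁) (hc₂ : c₂ < 0)
    (h : (A - c₁ • 1) * (A - c₂ • 1) = 0) (htr : A.trace = (n - 1) * c₁ + c₂) :
    pucciPlus lam Lam A hA = Lam * ((n - 1) * c₁) + lam * c₂ := by
  have hsum : ∑ i, hA.eigenvalues i = (Fintype.card (Fin n) - 1) * c₁ + 1 * c₂ := by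
    simpa [hA.trace_eq_sum_eigenvalues] using htr
  have := sum_comp_of_forall_eq_or_eq
    (fun t ↦ lam * (if t < 0 then t else 0) + Lam * (if 0 < t then t else 0))
    (hc₂.trans hc₁).ne' (hA.eigenvalues_eq_or_eq_of_mul_eq_zero h) hsum
  rw [pucciPlus, Finset.mul_sum, Finset.mul_sum, ← Finset.sum_add_distrib, this]
  simp only [Fintype.card_fin, hc₁, hc₂, hc₁.not_gt, hc₂.not_gt, ↓reduceIte, mul_zero, zero_add,
    add_zero, one_mul]
  ring

theorem isHermitian_smul_one_add_smul_vecMulVec {ι : Type*} [Fintype ι] [DecidableEq ι]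
    (c d : ℝ) (v : ι → ℝ) : (c • (1 : Matrix ι ι ℝ) + d • vecMulVec v v).IsHermitian :=
  (isHermitian_one.smul (.all c)).add <| IsHermitian.smul
    (by rw [IsHermitian, conjTranspose_vecMulVec, star_trivial]) (.all d)

theorem pucciPlus_smul_one_add_smul_vecMulVec (lam Lam : ℝ) {n : ℕ} {c d : ℝ} (v : Fin n → ℝ)
    (hc : 0 < c) (hcd : c + d * (v ⬝ᵥ v) < 0)
    (hA : (c • (1 : Matrix (Fin n) (Fin n) ℝ) + d • vecMulVec v v).IsHermitian) :
    pucciPlus lam Lam _ hA = Lam * ((n - 1) * c) + lam * (c + d * (v ⬝ᵥ v)) := by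
  refine pucciPlus_eq_of_mul_eq_zero lam Lam hA hc hcd ?_ ?_
  · rw [add_sub_cancel_left, add_smul, add_sub_add_left_eq_sub, mul_sub, smul_mul_smul_comm,
      smul_mul_smul_comm, vecMulVec_mul_vecMulVec, vecMulVec_smul, mul_one, smul_smul, mul_assoc,
      sub_self]
  · rw [trace_add, trace_smul, trace_smul, trace_one, trace_vecMulVec, Fintype.card_fin,
      smul_eq_mul, smul_eq_mul]
    ring

theorem exists_pucciPlus_hessian_eq_of_eventuallyEq_norm_rpow (lam Lam : ℝ) {n : ℕ}
    {φ : EuclideanSpace ℝ (Fin n) → ℝ} {x : EuclideanSpace ℝ (Fin n)} (hx : x ≠ 0) {c m p : ℝ}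
    (hφ : φ =ᶠ[𝓝 x] fun y ↦ c + m * ‖y‖ ^ p) (hmp : 0 < m * p) (hp : p < 1) :
    ∃ hH : (hessian φ x).IsHermitian, pucciPlus lam Lam (hessian φ x) hH =
      m * p * ‖x‖ ^ (p - 2) * (Lam * (n - 1) + lam * (p - 1)) := by
  have hc : 0 < m * p * ‖x‖ ^ (p - 2) := by have := norm_pos_iff.mpr hx; positivity
  have hdot :
      m * p * (p - 2) * ‖x‖ ^ (p - 4) * (⇑x ⬝ᵥ ⇑x) = (p - 2) * (m * p * ‖x‖ ^ (p - 2)) := by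
    have hxx : ⇑x ⬝ᵥ ⇑x = ‖x‖ ^ 2 := by
      rw [← real_inner_self_eq_norm_sq, EuclideanSpace.inner_eq_star_dotProduct, star_trivial]
    have hpow : ‖x‖ ^ (p - 4) * ‖x‖ ^ 2 = ‖x‖ ^ (p - 2) := by
      rw [← Real.rpow_add_natCast (norm_ne_zero_iff.mpr hx)]
      congr 1
      push_cast
      ring
    rw [hxx]
    linear_combination (m * p * (p - 2)) * hpow
  rw [hessian_eq_of_eventuallyEq_norm_rpow hx hφ]
  refine ⟨isHermitian_smul_one_add_smul_vecMulVec _ _ _, ?_⟩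
  rw [pucciPlus_smul_one_add_smul_vecMulVec _ _ _ hc (by rw [hdot]; nlinarith), hdot]
  ring

theorem stmt5_general {n : ℕ} (lam Lam : ℝ) (hlam : 0 < lam)
    (α : ℝ) (hα : (Lam * ((n : ℝ) - 1) - lam) / lam ≤ α) (hα0 : 0 < α)
    (a b : ℝ) (ha : 0 < a) (hab : a < b)
    (M₂ : ℝ) (hM₂ : M₂ = a ^ α / (b ^ α - a ^ α))
    (φ : EuclideanSpace ℝ (Fin n) → ℝ)
    (hφ : ∀ x : EuclideanSpace ℝ (Fin n), x ≠ 0 → φ x = 1 + M₂ - M₂ * ‖x‖ ^ (-α)) :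
    (∀ x : EuclideanSpace ℝ (Fin n), ‖x‖ = a / b → φ x = 0) ∧
    (∀ x : EuclideanSpace ℝ (Fin n), ‖x‖ = 1 → φ x = 1) ∧
    (∀ x : EuclideanSpace ℝ (Fin n), x ≠ 0 →
      ∃ hH : (hessian φ x).IsHermitian,
        pucciPlus lam Lam (hessian φ x) hH =
          M₂ * α * ‖x‖ ^ (-α - 2) * (Lam * ((n : ℝ) - 1) - lam * (α + 1)) ∧
        M₂ * α * ‖x‖ ^ (-α - 2) * (Lam * ((n : ℝ) - 1) - lam * (α + 1)) ≤ 0) := by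
  have hb : 0 < b := ha.trans hab
  have hgap : 0 < b ^ α - a ^ α := sub_pos.mpr (Real.rpow_lt_rpow ha.le hab hα0)
  have hM₂pos : 0 < M₂ := hM₂ ▸ div_pos (Real.rpow_pos_of_pos ha α) hgap
  refine ⟨fun x hx ↦ ?_, fun x hx ↦ ?_, fun x hx ↦ ?_⟩
  · rw [hφ x (norm_pos_iff.mp (hx ▸ div_pos ha hb)), hx, Real.rpow_neg (div_pos ha hb).le,
      Real.div_rpow ha.le hb.le, hM₂]
    field_simp
    ring
  · rw [hφ x (norm_pos_iff.mp (hx ▸ one_pos)), hx, Real.one_rpow]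
    ring
  have hφx : φ =ᶠ[𝓝 x] fun y ↦ (1 + M₂) + (-M₂) * ‖y‖ ^ (-α) :=
    (eventually_ne_nhds hx).mono fun y hy ↦ by rw [hφ y hy]; ring
  obtain ⟨hH, hpucci⟩ := exists_pucciPlus_hessian_eq_of_eventuallyEq_norm_rpow lam Lam hx hφx
    (by rw [neg_mul_neg]; exact mul_pos hM₂pos hα0) (by linarith)
  have hfac : Lam * ((n : ℝ) - 1) - lam * (α + 1) ≤ 0 := by
    rw [div_le_iff₀ hlam] at hα
    linarith
  refine ⟨hH, by rw [hpucci]; ring, mul_nonpos_of_nonneg_of_nonpos ?_ hfac⟩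
  have := norm_pos_iff.mpr hx
  positivity

theorem stmt5 {n : ℕ} (lam Lam : ℝ) (hlam : 0 < lam) (hLam : lam ≤ Lam)
    (α : ℝ) (hα : (Lam * ((n : ℝ) - 1) - lam) / lam ≤ α) (hα0 : 0 < α)
    (a b : ℝ) (ha : 0 < a) (hab : a < b)
    (M₂ : ℝ) (hM₂ : M₂ = a ^ α / (b ^ α - a ^ α))
    (φ : EuclideanSpace ℝ (Fin n) → ℝ)
    (hφ : ∀ x : EuclideanSpace ℝ (Fin n), x ≠ 0 → φ x = 1 + M₂ - M₂ * ‖x‖ ^ (-α)) :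
    (∀ x : EuclideanSpace ℝ (Fin n), ‖x‖ = a / b → φ x = 0) ∧
    (∀ x : EuclideanSpace ℝ (Fin n), ‖x‖ = 1 → φ x = 1) ∧
    (∀ x : EuclideanSpace ℝ (Fin n), x ≠ 0 →
      ∃ hH : (hessian φ x).IsHermitian,
        pucciPlus lam Lam (hessian φ x) hH =
          M₂ * α * ‖x‖ ^ (-α - 2) * (Lam * ((n : ℝ) - 1) - lam * (α + 1)) ∧
        M₂ * α * ‖x‖ ^ (-α - 2) * (Lam * ((n : ℝ) - 1) - lam * (α + 1)) ≤ 0) :=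
  stmt5_general lam Lam hlam α hα hα0 a b ha hab M₂ hM₂ φ hφ
end

section
/- Let u be a nonnegative subharmonic function on a domain containing the ball B_ρ(0) ⊂ ℝⁿ for some 0 < ρ ≤ 1. If sup_{B_ρ(0)} u ≤ N·ρ and |{u ≠ 0} ∩ B_ρ(0)| ≤ ε₀·|B_ρ(0)| for constants N, ε₀ ≥ 0, then sup_{B_{ρ/2}(0)} u ≤ N·ρ·ε₀·2ⁿ. -/
/-!
Apply the sub-mean value property on the ball `B_{ρ/2}(y) ⊆ B_ρ(0)`. Since `u ≤ Nρ` there and `u`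
vanishes off a set of measure at most `ε₀ |B_ρ(0)|`, the average of `u` over that ball is at most
`Nρ ε₀ |B_ρ(0)| / |B_{ρ/2}(y)| = Nρ ε₀ 2ⁿ`.
-/

open MeasureTheory Metric

section SupportBound

variable {α : Type*} [MeasurableSpace α] {μ : Measure α}

lemma integral_le_toReal_lintegral_ofReal (f : α → ℝ) :
    ∫ x, f x ∂μ ≤ (∫⁻ x, ENNReal.ofReal (f x) ∂μ).toReal := by
  by_cases hf : Integrable f μ
  · rw [integral_eq_lintegral_pos_part_sub_lintegral_neg_part hf]
    linarith [ENNReal.toReal_nonneg (a := ∫⁻ x, ENNReal.ofReal (-f x) ∂μ)]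
  · rw [integral_undef hf]
    exact ENNReal.toReal_nonneg

lemma setIntegral_le_mul_measureReal_support {f : α → ℝ} {s : Set α} {M : ℝ}
    (hs : MeasurableSet s) (hM : 0 ≤ M) (hf : ∀ x ∈ s, f x ≤ M)
    (hfin : μ ({x | f x ≠ 0} ∩ s) ≠ ⊤) :
    ∫ x in s, f x ∂μ ≤ M * μ.real ({x | f x ≠ 0} ∩ s) := by
  have hpointwise : ∀ᵐ x ∂μ.restrict s,
      ENNReal.ofReal (f x) ≤ {x | f x ≠ 0}.indicator (fun _ ↦ ENNReal.ofReal M) x := by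
    filter_upwards [ae_restrict_mem hs] with x hx
    by_cases h : f x = 0
    · simp [h]
    · simpa [h] using ENNReal.ofReal_le_ofReal (hf x hx)
  have hlintegral : ∫⁻ x in s, ENNReal.ofReal (f x) ∂μ ≤
      ENNReal.ofReal M * μ ({x | f x ≠ 0} ∩ s) := by
    rw [← Measure.restrict_apply' hs]
    exact (lintegral_mono_ae hpointwise).trans (lintegral_indicator_const_le _ _)
  calc ∫ x in s, f x ∂μ ≤ (∫⁻ x in s, ENNReal.ofReal (f x) ∂μ).toReal :=
        integral_le_toReal_lintegral_ofReal f
    _ ≤ (ENNReal.ofReal M * μ ({x | f x ≠ 0} ∩ s)).toReal :=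
        ENNReal.toReal_mono (ENNReal.mul_ne_top ENNReal.ofReal_ne_top hfin) hlintegral
    _ = M * μ.real ({x | f x ≠ 0} ∩ s) := by
        rw [ENNReal.toReal_mul, ENNReal.toReal_ofReal hM, measureReal_def]

lemma le_mul_measureReal_support_div_of_le_setAverage {f : α → ℝ} {s : Set α} {M c : ℝ}
    (hs : MeasurableSet s) (hμs : μ s ≠ ⊤) (hM : 0 ≤ M) (hf : ∀ x ∈ s, f x ≤ M)
    (hc : c ≤ ⨍ x in s, f x ∂μ) :
    c ≤ M * μ.real ({x | f x ≠ 0} ∩ s) / μ.real s := by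
  rw [setAverage_eq, smul_eq_mul] at hc
  calc c ≤ (μ.real s)⁻¹ * ∫ x in s, f x ∂μ := hc
    _ ≤ (μ.real s)⁻¹ * (M * μ.real ({x | f x ≠ 0} ∩ s)) := by
        gcongr
        exact setIntegral_le_mul_measureReal_support hs hM hf
          (measure_ne_top_of_subset Set.inter_subset_right hμs)
    _ = M * μ.real ({x | f x ≠ 0} ∩ s) / μ.real s := inv_mul_eq_div _ _

end SupportBound

lemma addHaar_real_ball_mul_of_pos {E : Type*} [NormedAddCommGroup E] [NormedSpace ℝ E]
    [MeasurableSpace E] [BorelSpace E] [FiniteDimensional ℝ E] (μ : Measure E)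
    [μ.IsAddHaarMeasure] (x y : E) {c : ℝ} (hc : 0 < c) (r : ℝ) :
    μ.real (ball x (c * r)) = c ^ Module.finrank ℝ E * μ.real (ball y r) := by
  rw [measureReal_def, Measure.addHaar_ball_mul_of_pos μ x hc, ENNReal.toReal_mul,
    ENNReal.toReal_ofReal (by positivity), ← Measure.addHaar_ball_center μ y, measureReal_def]

theorem stmt7_general {n : ℕ} (ρ : ℝ) (hρ0 : 0 < ρ)
    (Ω : Set (EuclideanSpace ℝ (Fin n)))
    (hB : ball (0 : EuclideanSpace ℝ (Fin n)) ρ ⊆ Ω)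
    (u : EuclideanSpace ℝ (Fin n) → ℝ)
    (hsub : ∀ (y : EuclideanSpace ℝ (Fin n)) (r : ℝ), 0 < r → ball y r ⊆ Ω →
      u y ≤ ⨍ x in ball y r, u x ∂volume)
    (N ε₀ : ℝ) (hN : 0 ≤ N) (hε₀ : 0 ≤ ε₀)
    (h1 : ∀ x ∈ ball (0 : EuclideanSpace ℝ (Fin n)) ρ, u x ≤ N * ρ)
    (h2 : volume ({x | u x ≠ 0} ∩ ball (0 : EuclideanSpace ℝ (Fin n)) ρ) ≤
      ENNReal.ofReal ε₀ * volume (ball (0 : EuclideanSpace ℝ (Fin n)) ρ)) :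
    ∀ x ∈ ball (0 : EuclideanSpace ℝ (Fin n)) (ρ / 2), u x ≤ N * ρ * ε₀ * 2 ^ n := by
  intro y hy
  have hball : ball y (ρ / 2) ⊆ ball 0 ρ :=
    ball_subset_ball' (by linarith [mem_ball.mp hy])
  have hsupport : volume.real ({x | u x ≠ 0} ∩ ball y (ρ / 2)) ≤
      ε₀ * volume.real (ball (0 : EuclideanSpace ℝ (Fin n)) ρ) := by
    have h := (measure_mono (Set.inter_subset_inter_right _ hball)).trans h2
    rw [measureReal_def, measureReal_def, ← ENNReal.toReal_ofReal hε₀, ← ENNReal.toReal_mul]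
    exact ENNReal.toReal_mono (ENNReal.mul_ne_top ENNReal.ofReal_ne_top measure_ball_lt_top.ne) h
  have hvolume : volume.real (ball (0 : EuclideanSpace ℝ (Fin n)) ρ) =
      2 ^ n * volume.real (ball y (ρ / 2)) := by
    simpa [mul_div_cancel₀] using addHaar_real_ball_mul_of_pos volume 0 y two_pos (ρ / 2)
  have hpos : 0 < volume.real (ball y (ρ / 2)) :=
    ENNReal.toReal_pos (measure_ball_pos _ _ (half_pos hρ0)).ne' measure_ball_lt_top.ne
  calc u y ≤ N * ρ * volume.real ({x | u x ≠ 0} ∩ ball y (ρ / 2)) / volume.real (ball y (ρ / 2)) :=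
        le_mul_measureReal_support_div_of_le_setAverage measurableSet_ball measure_ball_lt_top.ne
          (by positivity) (fun x hx ↦ h1 x (hball hx))
          (hsub y (ρ / 2) (half_pos hρ0) (hball.trans hB))
    _ ≤ N * ρ * (ε₀ * volume.real (ball (0 : EuclideanSpace ℝ (Fin n)) ρ)) /
          volume.real (ball y (ρ / 2)) := by gcongr
    _ = N * ρ * ε₀ * 2 ^ n := by
        rw [hvolume]
        field_simp

theorem stmt7 {n : ℕ} (ρ : ℝ) (hρ0 : 0 < ρ) (hρ1 : ρ ≤ 1)
    (Ω : Set (EuclideanSpace ℝ (Fin n))) (hΩ : IsOpen Ω)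
    (hB : ball (0 : EuclideanSpace ℝ (Fin n)) ρ ⊆ Ω)
    (u : EuclideanSpace ℝ (Fin n) → ℝ) (hu0 : ∀ x ∈ Ω, 0 ≤ u x)
    (hsub : ∀ (y : EuclideanSpace ℝ (Fin n)) (r : ℝ), 0 < r → ball y r ⊆ Ω →
      u y ≤ ⨍ x in ball y r, u x ∂volume)
    (N ε₀ : ℝ) (hN : 0 ≤ N) (hε₀ : 0 ≤ ε₀)
    (h1 : ∀ x ∈ ball (0 : EuclideanSpace ℝ (Fin n)) ρ, u x ≤ N * ρ)
    (h2 : volume ({x | u x ≠ 0} ∩ ball (0 : EuclideanSpace ℝ (Fin n)) ρ) ≤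
      ENNReal.ofReal ε₀ * volume (ball (0 : EuclideanSpace ℝ (Fin n)) ρ)) :
    ∀ x ∈ ball (0 : EuclideanSpace ℝ (Fin n)) (ρ / 2), u x ≤ N * ρ * ε₀ * 2 ^ n :=
  stmt7_general ρ hρ0 Ω hB u hsub N ε₀ hN hε₀ h1 h2
end

section
/- Let u : B₁(0) ⊂ ℝⁿ → ℝ be Lipschitz on each ball B_{h/2}(x) contained in the open support of u with constant C (where h = dist(x, ∂supp u)), and suppose additionally that |u(x)| ≤ C·dist(x, ∂supp u) for every x in B_{1/2}(0) within the support of u, with u = 0 outside its support. Then u is Lipschitz on B_{1/4}(0) with Lipschitz constant at most 4C. -/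
open Metric Set

lemma key18 {n : ℕ} (u : EuclideanSpace ℝ (Fin n) → ℝ) (C : ℝ) (hC : 0 ≤ C)
    (S : Set (EuclideanSpace ℝ (Fin n))) (hS : S = closure {x | u x ≠ 0})
    (hzero : ∀ x, x ∉ S → u x = 0)
    (hint : ∀ x ∈ interior S, ∀ y ∈ ball x (infDist x (frontier S) / 2),
      ∀ z ∈ ball x (infDist x (frontier S) / 2), |u y - u z| ≤ C * dist y z)
    (hgrowth : ∀ x ∈ ball (0 : EuclideanSpace ℝ (Fin n)) (1 / 2),
      x ∈ S → |u x| ≤ C * infDist x (frontier S)) :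
    ∀ x ∈ ball (0 : EuclideanSpace ℝ (Fin n)) (1 / 4),
      ∀ y ∈ ball (0 : EuclideanSpace ℝ (Fin n)) (1 / 4),
        infDist y (frontier S) ≤ infDist x (frontier S) →
        |u x - u y| ≤ 4 * C * dist x y := by
  have hScl : IsClosed S := hS ▸ isClosed_closure
  intro x hx y hy hdle
  set F := frontier S with hF
  have hdxnn : 0 ≤ infDist x F := infDist_nonneg
  rcases lt_or_ge (2 * dist x y) (infDist x F) with h2 | h2
  · -- close case
    have hdpos : 0 < infDist x F := lt_of_le_of_lt (by positivity) h2
    by_cases hxS : x ∈ S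
    · -- x ∈ interior S
      have hxi : x ∈ interior S := by
        by_contra hxi
        have hxf : x ∈ F := by
          rw [hF, hScl.frontier_eq]; exact ⟨hxS, hxi⟩
        have := infDist_zero_of_mem hxf
        linarith
      have hyb : y ∈ ball x (infDist x F / 2) := by
        rw [mem_ball, dist_comm]; linarith [dist_nonneg (x := x) (y := y)]
      have hxb : x ∈ ball x (infDist x F / 2) := by
        rw [mem_ball, dist_self]; linarith
      have := hint x hxi y hyb x hxb
      rw [abs_sub_comm, dist_comm] at this
      nlinarith [dist_nonneg (x := x) (y := y)]
    · -- x outside S: show y ∉ S too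
      have hyS : y ∉ S := by
        intro hyS
        -- every point of the segment avoids the frontier
        have hseg : segment ℝ x y ⊆ closedBall x (dist x y) :=
          (convex_closedBall x (dist x y)).segment_subset (mem_closedBall_self dist_nonneg)
            (by rw [mem_closedBall, dist_comm])
        have hsub : segment ℝ x y ⊆ Sᶜ ∪ interior S := by
          intro z hz
          have hzF : z ∉ F := fun hzF => by
            have h1 : infDist x F ≤ dist x z := infDist_le_dist_of_mem hzF
            have h2' : dist x z ≤ dist x y := by simpa [mem_closedBall, dist_comm z x] using hseg hz
            linarith [dist_nonneg (x := x) (y := y)]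
          by_cases hzS : z ∈ S
          · right
            rcases (hScl.frontier_eq ▸ hzF : z ∉ S \ interior S) with h
            simp only [Set.mem_diff, not_and, not_not] at h
            exact h hzS
          · exact Or.inl hzS
        have hyi : y ∈ interior S := by
          have hyF : y ∉ F := fun hyF => by
            have h1 : infDist x F ≤ dist x y := infDist_le_dist_of_mem hyF
            linarith [dist_nonneg (x := x) (y := y)]
          rcases (hScl.frontier_eq ▸ hyF : y ∉ S \ interior S) with h
          simp only [Set.mem_diff, not_and, not_not] at h
          exact h hyS
        have hconn : IsPreconnected (segment ℝ x y) :=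
          (convex_segment x y).isPreconnected
        have := hconn Sᶜ (interior S) hScl.isOpen_compl isOpen_interior hsub
          ⟨x, left_mem_segment ℝ x y, hxS⟩ ⟨y, right_mem_segment ℝ x y, hyi⟩
        rcases this with ⟨z, _, hz1, hz2⟩
        exact hz1 (interior_subset hz2)
      rw [hzero x hxS, hzero y hyS]
      simp only [sub_zero, abs_zero]
      positivity
  · -- far case : use growth
    have hx2 : x ∈ ball (0 : EuclideanSpace ℝ (Fin n)) (1 / 2) :=
      ball_subset_ball (by norm_num) hx
    have hy2 : y ∈ ball (0 : EuclideanSpace ℝ (Fin n)) (1 / 2) :=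
      ball_subset_ball (by norm_num) hy
    have bx : |u x| ≤ C * infDist x F := by
      by_cases hxS : x ∈ S
      · exact hgrowth x hx2 hxS
      · rw [hzero x hxS, abs_zero]; positivity
    have by' : |u y| ≤ C * infDist x F := by
      by_cases hyS : y ∈ S
      · exact le_trans (hgrowth y hy2 hyS) (by nlinarith)
      · rw [hzero y hyS, abs_zero]; positivity
    have habs : |u x - u y| ≤ |u x| + |u y| := abs_sub _ _
    nlinarith

theorem stmt18 {n : ℕ} (u : EuclideanSpace ℝ (Fin n) → ℝ) (C : ℝ) (hC : 0 ≤ C)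
    (S : Set (EuclideanSpace ℝ (Fin n))) (hS : S = closure {x | u x ≠ 0})
    (hzero : ∀ x, x ∉ S → u x = 0)
    (hint : ∀ x ∈ interior S, ∀ y ∈ ball x (infDist x (frontier S) / 2),
      ∀ z ∈ ball x (infDist x (frontier S) / 2), |u y - u z| ≤ C * dist y z)
    (hgrowth : ∀ x ∈ ball (0 : EuclideanSpace ℝ (Fin n)) (1 / 2),
      x ∈ S → |u x| ≤ C * infDist x (frontier S)) :
    ∀ x ∈ ball (0 : EuclideanSpace ℝ (Fin n)) (1 / 4),
      ∀ y ∈ ball (0 : EuclideanSpace ℝ (Fin n)) (1 / 4),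
        |u x - u y| ≤ 4 * C * dist x y := by
  intro x hx y hy
  rcases le_total (infDist y (frontier S)) (infDist x (frontier S)) with h | h
  · exact key18 u C hC S hS hzero hint hgrowth x hx y hy h
  · rw [abs_sub_comm, dist_comm]
    exact key18 u C hC S hS hzero hint hgrowth y hy x hx h
end
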